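/- Let H be a real Hilbert space, K : H → H a bounded self-adjoint linear operator, λ₁ > 0 a real number, and φ₁ ∈ H a unit vector with K φ₁ = λ₁ φ₁. Suppose there exists ρ ∈ [0, λ₁) such that ‖K x‖ ≤ ρ ‖x‖ for every x ∈ H orthogonal to φ₁. Let G : H → H be a bounded linear operator and let ψ ∈ H satisfy ⟨ψ, φ₁⟩ ≠ 0. Then for all sufficiently large integers t the inner product ⟨K^t ψ, K^{t−1} ψ⟩ is strictly positive, and the ratio ⟨K^t ψ, G (K^{t−1} ψ)⟩ / ⟨K^t ψ, K^{t−1} ψ⟩ converges to ⟨φ₁, G φ₁⟩ as t → ∞. -/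

import Mathlib

open Filter Topology
open scoped InnerProductSpace

/-! Write `ψ = ⟪ψ, φ₁⟫ φ₁ + w` with `w ⊥ φ₁`. Self-adjointness keeps the orbit of `w` orthogonal
to `φ₁`, so the gap gives `‖Kᵗ w‖ ≤ ρᵗ ‖w‖`, and the power method `λ₁⁻ᵗ Kᵗ ψ → ⟪ψ, φ₁⟫ φ₁ ≠ 0`
follows. The ratio does not change when `Kᵗ ψ` and `Kᵗ⁻¹ ψ` are rescaled by `λ₁⁻ᵗ` and
`λ₁⁻⁽ᵗ⁻¹⁾`, so it tends to its value at `⟪ψ, φ₁⟫ φ₁`, which is `⟪φ₁, G φ₁⟫`. -/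

section PowerMethod

variable {H : Type*} [NormedAddCommGroup H] [InnerProductSpace ℝ H]

lemma Set.MapsTo.norm_pow_apply_le {K : H →L[ℝ] H} {S : Set H} (hS : Set.MapsTo K S S)
    {ρ : ℝ} (hρ : 0 ≤ ρ) (hK : ∀ x ∈ S, ‖K x‖ ≤ ρ * ‖x‖) {x : H} (hx : x ∈ S) (t : ℕ) :
    ‖(K ^ t) x‖ ≤ ρ ^ t * ‖x‖ := by
  induction t with
  | zero => simp
  | succ t ih =>
    have hKt : (K ^ t) x ∈ S := by rw [pow_apply_eq_iterate]; exact hS.iterate t hx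
    calc ‖(K ^ (t + 1)) x‖ = ‖K ((K ^ t) x)‖ := by rw [pow_succ', mul_apply_eq_comp]
      _ ≤ ρ * (ρ ^ t * ‖x‖) := (hK _ hKt).trans (mul_le_mul_of_nonneg_left ih hρ)
      _ = ρ ^ (t + 1) * ‖x‖ := by ring

lemma LinearMap.IsSymmetric.mapsTo_orthogonal_eigenvector {K : H →L[ℝ] H}
    (hK : (K : H →ₗ[ℝ] H).IsSymmetric) {lam : ℝ} {φ : H} (heig : K φ = lam • φ) :
    Set.MapsTo K {x | ⟪x, φ⟫_ℝ = 0} {x | ⟪x, φ⟫_ℝ = 0} := by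
  intro x (hx : ⟪x, φ⟫_ℝ = 0)
  change ⟪K x, φ⟫_ℝ = 0
  rw [show ⟪K x, φ⟫_ℝ = ⟪x, K φ⟫_ℝ from hK x φ, heig, real_inner_smul_right, hx, mul_zero]

lemma ContinuousLinearMap.pow_apply_eq_pow_smul {K : H →L[ℝ] H} {lam : ℝ} {φ : H}
    (heig : K φ = lam • φ) (t : ℕ) : (K ^ t) φ = lam ^ t • φ := by
  induction t with
  | zero => simp
  | succ t ih => rw [pow_succ', mul_apply_eq_comp, ih, map_smul, heig, smul_smul, pow_succ]

theorem LinearMap.IsSymmetric.tendsto_inv_pow_smul_pow_apply {K : H →L[ℝ] H}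
    (hK : (K : H →ₗ[ℝ] H).IsSymmetric) {lam ρ : ℝ} (hlam : 0 < lam) (hρ : 0 ≤ ρ)
    (hρlam : ρ < lam) {φ : H} (hφ : ‖φ‖ = 1) (heig : K φ = lam • φ)
    (hgap : ∀ x : H, ⟪x, φ⟫_ℝ = 0 → ‖K x‖ ≤ ρ * ‖x‖) (ψ : H) :
    Tendsto (fun t : ℕ => (lam ^ t)⁻¹ • (K ^ t) ψ) atTop (𝓝 (⟪ψ, φ⟫_ℝ • φ)) := by
  set a := ⟪ψ, φ⟫_ℝ
  set w := ψ - a • φ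
  have hw : ⟪w, φ⟫_ℝ = 0 := by
    rw [inner_sub_left, real_inner_smul_left, real_inner_self_eq_norm_sq, hφ]; ring
  have hsplit : ∀ t : ℕ, (lam ^ t)⁻¹ • (K ^ t) ψ = a • φ + (lam ^ t)⁻¹ • (K ^ t) w := by
    intro t
    rw [← add_sub_cancel (a • φ) ψ, map_add, map_smul,
      ContinuousLinearMap.pow_apply_eq_pow_smul heig, smul_add, smul_smul, smul_smul,
      mul_right_comm, inv_mul_cancel₀ (pow_ne_zero t hlam.ne'), one_mul]
  have hbound : ∀ t : ℕ, ‖(lam ^ t)⁻¹ • (K ^ t) w‖ ≤ ‖w‖ * (ρ / lam) ^ t := by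
    intro t
    rw [norm_smul, norm_inv, norm_pow, Real.norm_of_nonneg hlam.le, div_pow]
    calc (lam ^ t)⁻¹ * ‖(K ^ t) w‖ ≤ (lam ^ t)⁻¹ * (ρ ^ t * ‖w‖) := by
          gcongr
          exact (hK.mapsTo_orthogonal_eigenvector heig).norm_pow_apply_le hρ hgap hw t
      _ = ‖w‖ * (ρ ^ t / lam ^ t) := by ring
  have hgeom : Tendsto (fun t : ℕ => ‖w‖ * (ρ / lam) ^ t) atTop (𝓝 0) := by
    simpa using (tendsto_pow_atTop_nhds_zero_of_lt_one (div_nonneg hρ hlam.le)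
      ((div_lt_one hlam).2 hρlam)).const_mul ‖w‖
  simp_rw [hsplit]
  simpa using (squeeze_zero_norm hbound hgeom).const_add (a • φ)

lemma tendsto_inner_map_div_inner {v v' : ℕ → H} {p : H} (hv : Tendsto v atTop (𝓝 p))
    (hv' : Tendsto v' atTop (𝓝 p)) (hp : p ≠ 0) (G : H →L[ℝ] H) :
    Tendsto (fun t => ⟪v t, G (v' t)⟫_ℝ / ⟪v t, v' t⟫_ℝ) atTop (𝓝 (⟪p, G p⟫_ℝ / ⟪p, p⟫_ℝ)) :=
  (hv.inner ((G.continuous.tendsto p).comp hv')).div (hv.inner hv')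
    (real_inner_self_pos.2 hp).ne'

lemma inner_smul_map_smul_div_inner_smul {c c' : ℝ} (hc : c ≠ 0) (hc' : c' ≠ 0)
    (G : H →L[ℝ] H) (x y : H) :
    ⟪c • x, G (c' • y)⟫_ℝ / ⟪c • x, c' • y⟫_ℝ = ⟪x, G y⟫_ℝ / ⟪x, y⟫_ℝ := by
  rw [map_smul, real_inner_smul_left, real_inner_smul_right, real_inner_smul_left,
    real_inner_smul_right, ← mul_assoc, ← mul_assoc, mul_div_mul_left _ _ (mul_ne_zero hc hc')]

end PowerMethod

theorem stmt0 {H : Type*} [NormedAddCommGroup H] [InnerProductSpace ℝ H] [CompleteSpace H]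
    (K : H →L[ℝ] H) (hK : IsSelfAdjoint K)
    (lam₁ : ℝ) (hlam₁ : 0 < lam₁) (phi₁ : H) (hphi₁ : ‖phi₁‖ = 1)
    (heig : K phi₁ = lam₁ • phi₁)
    (rho : ℝ) (hrho : rho ∈ Set.Ico 0 lam₁)
    (hgap : ∀ x : H, ⟪x, phi₁⟫_ℝ = 0 → ‖K x‖ ≤ rho * ‖x‖)
    (G : H →L[ℝ] H) (psi : H) (hpsi : ⟪psi, phi₁⟫_ℝ ≠ 0) :
    (∀ᶠ t : ℕ in atTop, 0 < ⟪(K ^ t) psi, (K ^ (t - 1)) psi⟫_ℝ) ∧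
    Tendsto (fun t : ℕ =>
        ⟪(K ^ t) psi, G ((K ^ (t - 1)) psi)⟫_ℝ / ⟪(K ^ t) psi, (K ^ (t - 1)) psi⟫_ℝ)
      atTop (nhds ⟪phi₁, G phi₁⟫_ℝ) := by
  set v : ℕ → H := fun t => (lam₁ ^ t)⁻¹ • (K ^ t) psi
  have hKv (t : ℕ) : (K ^ t) psi = lam₁ ^ t • v t :=
    (smul_inv_smul₀ (pow_ne_zero t hlam₁.ne') _).symm
  have hv : Tendsto v atTop (𝓝 (⟪psi, phi₁⟫_ℝ • phi₁)) :=
    hK.isSymmetric.tendsto_inv_pow_smul_pow_apply hlam₁ hrho.1 hrho.2 hphi₁ heig hgap psi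
  have hv' : Tendsto (fun t => v (t - 1)) atTop (𝓝 (⟪psi, phi₁⟫_ℝ • phi₁)) :=
    hv.comp (tendsto_sub_atTop_nat 1)
  have hp : ⟪psi, phi₁⟫_ℝ • phi₁ ≠ 0 := smul_ne_zero hpsi (norm_ne_zero_iff.1 (by simp [hphi₁]))
  constructor
  · filter_upwards [(hv.inner hv').eventually (eventually_gt_nhds (real_inner_self_pos.2 hp))]
      with t ht
    rw [hKv, hKv, real_inner_smul_left, real_inner_smul_right]
    positivity
  · convert tendsto_inner_map_div_inner hv hv' hp G using 2 with t
    · rw [hKv, hKv, inner_smul_map_smul_div_inner_smul (pow_ne_zero _ hlam₁.ne')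
        (pow_ne_zero _ hlam₁.ne')]
    · rw [map_smul, real_inner_smul_left, real_inner_smul_right, real_inner_smul_left,
        real_inner_smul_right, real_inner_self_eq_norm_sq, hphi₁]
      field_simp
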